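/- Let 1 ≤ p < ∞ and let A : [0,1) → (0,1/2) be decreasing with A(r) → 0 as r → 1⁻. Then there exists a 2π-periodic function f ∈ L^p([−π,π]) such that, with u_r(θ) = P[f](re^{iθ}), one has ‖u_r − f‖_p ≥ A(r) for all 0 ≤ r < 1; that is, the L^p convergence of the Poisson integral to its boundary function can be arbitrarily slow. -/

import Mathlib

open Real Filter MeasureTheory Set Topology

noncomputable section

/-- The Poisson kernel for the unit disc. -/
def poissonKernelDisc (r θ : ℝ) : ℝ :=
  (1 - r ^ 2) / (2 * π * (1 - 2 * r * Real.cos θ + r ^ 2))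

/-- The Poisson integral of an integrable `f`, evaluated at the point `r e^{iθ}`. -/
def poissonIntegral (f : ℝ → ℝ) (r θ : ℝ) : ℝ :=
  ∫ φ in (-π)..π, f φ * poissonKernelDisc r (φ - θ)

/-- The Alexiewicz norm over the circle: the supremum of `|∫_I g|` over intervals `I`
of length at most `2π`. -/
def alexNorm (g : ℝ → ℝ) : ℝ :=
  sSup {v | ∃ a b : ℝ, a ≤ b ∧ b - a ≤ 2 * π ∧ v = |∫ x in a..b, g x|}

/-- The `L^p` norm on `[-π,π]`. -/
def lpNorm (p : ℝ) (g : ℝ → ℝ) : ℝ :=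
  (∫ θ in (-π)..π, |g θ| ^ p) ^ (1 / p)

/-!
The boundary function is a lacunary cosine series `f θ = ∑ c k * cos (n k * θ)`. The Poisson
formula for `z ↦ z ^ m` gives `P[cos (m ·)] = r ^ m * cos (m ·)`, so
`u_r - f = ∑ c k * (r ^ n k - 1) * cos (n k * θ)`; pairing with `cos (n k * θ)` and Hölder's
inequality bound `‖u_r - f‖_p` below by `|c k| * (1 - r ^ n k) / 2` for every `k`. Choose
thresholds `t k → 1` with `A ≤ 2⁻ᵏ / 4` beyond `t k`, and frequencies so large that
`t k ^ n k ≤ 1 / 2`. For `r` in `(t (k - 1), t k]` the `k`-th coefficient `c k = 2 * 2⁻ᵏ` alone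
gives `‖u_r - f‖_p ≥ A r`.
-/

lemma one_sub_two_mul_cos_add_sq_pos {r : ℝ} (h0 : 0 ≤ r) (h1 : r < 1) (ψ : ℝ) :
    0 < 1 - 2 * r * Real.cos ψ + r ^ 2 := by
  nlinarith [Real.cos_le_one ψ, Real.neg_one_le_cos ψ, sq_nonneg (1 - r), sq_nonneg (1 + r)]

lemma continuous_poissonKernelDisc {r : ℝ} (h0 : 0 ≤ r) (h1 : r < 1) :
    Continuous (poissonKernelDisc r) :=
  continuous_const.div (by fun_prop) fun ψ =>
    (mul_pos two_pi_pos (one_sub_two_mul_cos_add_sq_pos h0 h1 ψ)).ne'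

lemma poissonKernel_zero_circleMap (r θ φ : ℝ) :
    poissonKernel 0 (r * Complex.exp (θ * Complex.I)) (circleMap 0 1 φ)
      = 2 * π * poissonKernelDisc r (φ - θ) := by
  have hdist : ‖circleMap 0 1 φ - r * Complex.exp (θ * Complex.I)‖ ^ 2
      = 1 - 2 * r * Real.cos (φ - θ) + r ^ 2 := by
    rw [← Complex.normSq_eq_norm_sq, Complex.normSq_apply]
    simp only [circleMap, zero_add, Complex.ofReal_one, one_mul, Complex.sub_re, Complex.sub_im,
      Complex.exp_ofReal_mul_I_re, Complex.exp_ofReal_mul_I_im, Complex.re_ofReal_mul,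
      Complex.im_ofReal_mul, Real.cos_sub]
    nlinarith [Real.sin_sq_add_cos_sq φ, Real.sin_sq_add_cos_sq θ]
  simp only [poissonKernel_def, sub_zero]
  rw [hdist, poissonKernelDisc, norm_circleMap_zero, Complex.norm_mul,
    Complex.norm_exp_ofReal_mul_I, Complex.norm_real, Real.norm_eq_abs, abs_one, mul_one, sq_abs]
  field_simp

lemma circleMap_zero_one_pow (φ : ℝ) (n : ℕ) :
    circleMap 0 1 φ ^ n = Complex.exp ((n * φ : ℝ) * Complex.I) := by
  rw [circleMap, zero_add, Complex.ofReal_one, one_mul, ← Complex.exp_nat_mul]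
  push_cast
  ring_nf

lemma re_ofReal_mul_exp_pow (r θ : ℝ) (n : ℕ) :
    ((r * Complex.exp (θ * Complex.I)) ^ n).re = r ^ n * Real.cos (n * θ) := by
  rw [mul_pow, ← Complex.exp_nat_mul, ← Complex.ofReal_pow,
    show (n : ℂ) * (θ * Complex.I) = (n * θ : ℝ) * Complex.I by push_cast; ring,
    Complex.re_ofReal_mul, Complex.exp_ofReal_mul_I_re]

lemma periodic_cos_mul_poissonKernelDisc (r θ : ℝ) (n : ℕ) :
    Function.Periodic (fun φ => Real.cos (n * φ) * poissonKernelDisc r (φ - θ)) (2 * π) := by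
  intro φ
  simp only [poissonKernelDisc, show φ + 2 * π - θ = φ - θ + 2 * π by ring, Real.cos_add_two_pi,
    show (n : ℝ) * (φ + 2 * π) = n * φ + (n : ℤ) * (2 * π) by push_cast; ring,
    Real.cos_add_int_mul_two_pi]

theorem integral_cos_mul_poissonKernelDisc {r : ℝ} (h0 : 0 ≤ r) (h1 : r < 1) (n : ℕ) (θ : ℝ) :
    ∫ φ in (-π)..π, Real.cos (n * φ) * poissonKernelDisc r (φ - θ)
      = r ^ n * Real.cos (n * θ) := by
  have hw : (r : ℂ) * Complex.exp (θ * Complex.I) ∈ Metric.ball (0 : ℂ) 1 := by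
    simpa [Complex.norm_exp_ofReal_mul_I, abs_of_nonneg h0] using h1
  -- the real part of the Poisson integral formula for `z ↦ z ^ n`
  have hpoisson := (Differentiable.diffContOnCl (f := fun z : ℂ => z ^ n)
    (differentiable_id.pow n)).circleAverage_poissonKernel_smul hw
  simp only [Real.circleAverage_def, Pi.smul_apply', poissonKernel_zero_circleMap] at hpoisson
  have hP := continuous_poissonKernelDisc h0 h1
  have hint : IntervalIntegrable (fun φ : ℝ => (2 * π * poissonKernelDisc r (φ - θ)) •
      circleMap 0 1 φ ^ n) volume 0 (2 * π) :=
    Continuous.intervalIntegrable (by fun_prop) _ _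
  have hre := congrArg Complex.re hpoisson
  rw [Complex.smul_re, ← Complex.reCLM_apply, ← Complex.reCLM.intervalIntegral_comp_comm hint,
    re_ofReal_mul_exp_pow] at hre
  have hshift := (periodic_cos_mul_poissonKernelDisc r θ n).intervalIntegral_add_eq (-π) 0
  rw [show -π + 2 * π = π by ring, zero_add] at hshift
  rw [hshift, ← hre, smul_eq_mul, ← intervalIntegral.integral_const_mul]
  congr 1 with φ
  rw [Complex.reCLM_apply, circleMap_zero_one_pow, Complex.real_smul, Complex.re_ofReal_mul,
    Complex.exp_ofReal_mul_I_re]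
  field_simp

theorem integral_cos_int_mul (j : ℤ) :
    ∫ x in (-π)..π, Real.cos (j * x) = if j = 0 then 2 * π else 0 := by
  split_ifs with hj
  · simp only [hj, Int.cast_zero, zero_mul, Real.cos_zero, intervalIntegral.integral_const,
      sub_neg_eq_add, smul_eq_mul, mul_one]
    ring
  · rw [intervalIntegral.integral_comp_mul_left _ (Int.cast_ne_zero.2 hj), integral_cos, mul_neg,
      Real.sin_neg, Real.sin_int_mul_pi]
    simp

def cosNormSq (n : ℕ) : ℝ := if n = 0 then 2 * π else π

lemma pi_le_cosNormSq (n : ℕ) : π ≤ cosNormSq n := by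
  unfold cosNormSq
  split_ifs <;> linarith [pi_pos]

theorem integral_cos_mul_cos (m n : ℕ) :
    ∫ x in (-π)..π, Real.cos (m * x) * Real.cos (n * x) = if m = n then cosNormSq n else 0 := by
  have hprod (x : ℝ) : Real.cos (m * x) * Real.cos (n * x)
      = Real.cos (((m - n : ℤ) : ℝ) * x) / 2 + Real.cos (((m + n : ℤ) : ℝ) * x) / 2 := by
    push_cast
    rw [sub_mul, add_mul, Real.cos_sub, Real.cos_add]
    ring
  simp_rw [hprod]
  rw [intervalIntegral.integral_add (Continuous.intervalIntegrable (by fun_prop) _ _)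
      (Continuous.intervalIntegrable (by fun_prop) _ _), intervalIntegral.integral_div,
    intervalIntegral.integral_div, integral_cos_int_mul, integral_cos_int_mul, cosNormSq]
  split_ifs <;> first | omega | ring

lemma abs_mul_cos_le (a y : ℝ) : |a * Real.cos y| ≤ |a| := by
  rw [abs_mul]
  exact mul_le_of_le_one_right (abs_nonneg a) (Real.abs_cos_le_one y)

theorem Continuous.memLp_restrict_of_isCompact {E : Type*} [NormedAddCommGroup E] {f : ℝ → E}
    (hf : Continuous f) {s : Set ℝ} (hs : IsCompact s) (p : ENNReal) :
    MemLp f p (volume.restrict s) := by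
  have : IsFiniteMeasure (volume.restrict s) := isFiniteMeasure_restrict.2 hs.measure_lt_top.ne
  obtain ⟨C, hC⟩ := hs.exists_bound_of_continuousOn hf.continuousOn
  exact MemLp.of_bound hf.aestronglyMeasurable C
    ((ae_restrict_iff' hs.measurableSet).2 (Eventually.of_forall hC))

lemma lpNorm_nonneg (p : ℝ) (g : ℝ → ℝ) : 0 ≤ lpNorm p g :=
  Real.rpow_nonneg
    (intervalIntegral.integral_nonneg (by linarith [pi_pos]) fun _ _ => by positivity) _

theorem integral_abs_le_lpNorm {p : ℝ} (hp : 1 ≤ p) {G : ℝ → ℝ}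
    (hG : MemLp G (ENNReal.ofReal p) (volume.restrict (Icc (-π) π))) :
    ∫ x in (-π)..π, |G x| ≤ (2 * π) ^ (1 - 1 / p) * lpNorm p G := by
  set μ := volume.restrict (Ioc (-π) π)
  have hle : -π ≤ π := by linarith [pi_pos]
  have hp1 : (1 : ENNReal) ≤ ENNReal.ofReal p := by simpa using ENNReal.ofReal_le_ofReal hp
  have hGp : MemLp G (ENNReal.ofReal p) μ :=
    hG.mono_measure (Measure.restrict_mono Ioc_subset_Icc_self le_rfl)
  have hLp : lpNorm p G = (eLpNorm G (ENNReal.ofReal p) μ).toReal := by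
    rw [hGp.eLpNorm_eq_integral_rpow_norm (by positivity) ENNReal.ofReal_ne_top,
      ENNReal.toReal_ofReal (by positivity), ENNReal.toReal_ofReal (by positivity), _root_.lpNorm,
      intervalIntegral.integral_of_le hle, one_div]
    rfl
  have hL1 : ∫ x in (-π)..π, |G x| = (eLpNorm G 1 μ).toReal := by
    rw [(hGp.mono_exponent hp1).eLpNorm_eq_integral_rpow_norm one_ne_zero ENNReal.one_ne_top,
      ENNReal.toReal_ofReal (by positivity), intervalIntegral.integral_of_le hle]
    simp only [Real.norm_eq_abs, ENNReal.toReal_one, Real.rpow_one, inv_one]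
    rfl
  have hμ : μ univ = ENNReal.ofReal (2 * π) := by
    rw [Measure.restrict_apply_univ, Real.volume_Ioc]
    ring_nf
  have key := eLpNorm_le_eLpNorm_mul_rpow_measure_univ hp1 hGp.1
  rw [hμ, ENNReal.toReal_ofReal (by linarith), ENNReal.ofReal_rpow_of_pos two_pi_pos] at key
  rw [hL1, hLp, mul_comm, ← ENNReal.toReal_ofReal (Real.rpow_nonneg two_pi_pos.le _),
    ← ENNReal.toReal_mul]
  exact ENNReal.toReal_mono (ENNReal.mul_ne_top hGp.2.ne ENNReal.ofReal_ne_top)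
    (by simpa using key)

theorem abs_integral_mul_cos_le_lpNorm {p : ℝ} (hp : 1 ≤ p) {G : ℝ → ℝ}
    (hG : MemLp G (ENNReal.ofReal p) (volume.restrict (Icc (-π) π))) (ω : ℝ) :
    |∫ x in (-π)..π, G x * Real.cos (ω * x)| ≤ (2 * π) ^ (1 - 1 / p) * lpNorm p G := by
  have hle : -π ≤ π := by linarith [pi_pos]
  have hGi : IntervalIntegrable G volume (-π) π := by
    rw [intervalIntegrable_iff_integrableOn_Icc_of_le hle]
    exact hG.integrable (by simpa using ENNReal.ofReal_le_ofReal hp)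
  calc |∫ x in (-π)..π, G x * Real.cos (ω * x)| ≤ ∫ x in (-π)..π, |G x * Real.cos (ω * x)| :=
        intervalIntegral.abs_integral_le_integral_abs hle
    _ ≤ ∫ x in (-π)..π, |G x| :=
        intervalIntegral.integral_mono_on hle (hGi.mul_continuousOn (by fun_prop)).abs hGi.abs
          fun x _ => abs_mul_cos_le _ _
    _ ≤ (2 * π) ^ (1 - 1 / p) * lpNorm p G := integral_abs_le_lpNorm hp hG

def cosSeries (c : ℕ → ℝ) (n : ℕ → ℕ) (x : ℝ) : ℝ :=
  ∑' k, c k * Real.cos (n k * x)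

lemma periodic_cosSeries (c : ℕ → ℝ) (n : ℕ → ℕ) : Function.Periodic (cosSeries c n) (2 * π) := by
  intro x
  simp only [cosSeries, show ∀ k, (n k : ℝ) * (x + 2 * π) = n k * x + (n k : ℤ) * (2 * π) from
    fun k => by push_cast; ring, Real.cos_add_int_mul_two_pi]

section cosSeries

variable {c : ℕ → ℝ} (n : ℕ → ℕ)

lemma summable_mul_cos (hc : Summable c) (x : ℝ) :
    Summable fun k => c k * Real.cos (n k * x) :=
  hc.abs.of_norm_bounded fun _ => abs_mul_cos_le _ _

lemma continuous_cosSeries (hc : Summable c) : Continuous (cosSeries c n) :=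
  continuous_tsum (fun _ => by fun_prop) hc.abs fun _ _ => abs_mul_cos_le _ _

theorem hasSum_integral_cosSeries_mul (hc : Summable c) {g : ℝ → ℝ} {a b : ℝ}
    (hg : IntervalIntegrable g volume a b) :
    HasSum (fun k => ∫ x in a..b, c k * Real.cos (n k * x) * g x)
      (∫ x in a..b, cosSeries c n x * g x) := by
  refine intervalIntegral.hasSum_integral_of_dominated_convergence (fun k x => |c k| * |g x|)
    (fun _ => (Continuous.aestronglyMeasurable (by fun_prop)).mul hg.def'.aestronglyMeasurable)
    (fun k => Eventually.of_forall fun x _ => ?_)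
    (Eventually.of_forall fun x _ => hc.abs.mul_right _) ?_
    (Eventually.of_forall fun x _ => (summable_mul_cos n hc x).hasSum.mul_right (g x))
  · rw [Real.norm_eq_abs, abs_mul]
    exact mul_le_mul_of_nonneg_right (abs_mul_cos_le _ _) (abs_nonneg _)
  · simp_rw [tsum_mul_right]
    exact hg.abs.const_mul _

theorem integral_cosSeries_mul_cos (hc : Summable c) (hn : Function.Injective n) (k : ℕ) :
    ∫ x in (-π)..π, cosSeries c n x * Real.cos (n k * x) = c k * cosNormSq (n k) := by
  refine (hasSum_integral_cosSeries_mul n hc (g := fun x => Real.cos (n k * x))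
    (Continuous.intervalIntegrable (by fun_prop) _ _)).unique ?_
  convert hasSum_ite_eq k (c k * cosNormSq (n k)) using 2 with j
  simp_rw [mul_assoc, intervalIntegral.integral_const_mul, integral_cos_mul_cos, hn.eq_iff]
  split_ifs with h
  · rw [h]
  · rw [mul_zero]

theorem hasSum_poissonIntegral_cosSeries (hc : Summable c) {r : ℝ} (h0 : 0 ≤ r) (h1 : r < 1)
    (θ : ℝ) :
    HasSum (fun k => c k * r ^ n k * Real.cos (n k * θ))
      (poissonIntegral (cosSeries c n) r θ) := by
  have hP := continuous_poissonKernelDisc h0 h1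
  convert hasSum_integral_cosSeries_mul n hc (g := fun φ => poissonKernelDisc r (φ - θ))
    (Continuous.intervalIntegrable (by fun_prop) (-π) π) using 1
  · funext k
    simp_rw [mul_assoc, intervalIntegral.integral_const_mul,
      integral_cos_mul_poissonKernelDisc h0 h1]
  · rfl

theorem poissonIntegral_sub_cosSeries (hc : Summable c) {r : ℝ} (h0 : 0 ≤ r) (h1 : r < 1)
    (θ : ℝ) :
    poissonIntegral (cosSeries c n) r θ - cosSeries c n θ
      = cosSeries (fun k => c k * (r ^ n k - 1)) n θ :=
  ((hasSum_poissonIntegral_cosSeries n hc h0 h1 θ).sub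
    (summable_mul_cos n hc θ).hasSum).tsum_eq.symm.trans (tsum_congr fun k => by ring)

lemma summable_mul_pow_sub_one (hc : Summable c) {r : ℝ} (h0 : 0 ≤ r) (h1 : r ≤ 1) :
    Summable fun k => c k * (r ^ n k - 1) := by
  refine hc.abs.of_norm_bounded fun k => ?_
  rw [Real.norm_eq_abs, abs_mul, abs_sub_comm, abs_of_nonneg (sub_nonneg.2 (pow_le_one₀ h0 h1))]
  exact mul_le_of_le_one_right (abs_nonneg _) (sub_le_self _ (pow_nonneg h0 _))

theorem le_lpNorm_poissonIntegral_sub_cosSeries {p : ℝ} (hp : 1 ≤ p) (hc : Summable c)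
    (hn : Function.Injective n) {r : ℝ} (h0 : 0 ≤ r) (h1 : r < 1) (k : ℕ) :
    |c k| * (1 - r ^ n k) / 2
      ≤ lpNorm p (fun θ => poissonIntegral (cosSeries c n) r θ - cosSeries c n θ) := by
  have hb := summable_mul_pow_sub_one n hc h0 h1.le
  have hlow := abs_integral_mul_cos_le_lpNorm hp
    ((continuous_cosSeries n hb).memLp_restrict_of_isCompact isCompact_Icc _) (n k)
  rw [integral_cosSeries_mul_cos n hb hn k,
    ← funext (poissonIntegral_sub_cosSeries n hc h0 h1)] at hlow
  have hpow : 0 ≤ 1 - r ^ n k := sub_nonneg.2 (pow_le_one₀ h0 h1.le)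
  have hcoef : π * (|c k| * (1 - r ^ n k)) ≤ |c k * (r ^ n k - 1) * cosNormSq (n k)| := by
    rw [abs_mul, abs_mul, abs_sub_comm, abs_of_nonneg hpow,
      abs_of_nonneg (pi_pos.le.trans (pi_le_cosNormSq _)), mul_comm π]
    exact mul_le_mul_of_nonneg_left (pi_le_cosNormSq _) (by positivity)
  have hvol : (2 * π) ^ (1 - 1 / p) ≤ 2 * π := by
    refine (Real.rpow_le_rpow_of_exponent_le (by linarith [pi_gt_three]) ?_).trans_eq
      (Real.rpow_one _)
    linarith [show 0 ≤ 1 / p by positivity]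
  refine le_of_mul_le_mul_left ?_ two_pi_pos
  calc 2 * π * (|c k| * (1 - r ^ n k) / 2) = π * (|c k| * (1 - r ^ n k)) := by ring
    _ ≤ (2 * π) ^ (1 - 1 / p) * lpNorm p _ := hcoef.trans hlow
    _ ≤ 2 * π * lpNorm p _ := by gcongr; exact lpNorm_nonneg p _

end cosSeries

theorem exists_thresholds {A : ℝ → ℝ} (hA : ∀ r ∈ Ico (0 : ℝ) 1, A r < 1 / 2)
    (hlim : Tendsto A (𝓝[<] 1) (𝓝 0)) :
    ∃ t : ℕ → ℝ, (∀ k, t k ∈ Ico (0 : ℝ) 1) ∧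
      ∀ r ∈ Ico (0 : ℝ) 1, ∃ k, 2 * A r ≤ (1 / 2) ^ k ∧ r ≤ t k := by
  have hthreshold (k : ℕ) : ∃ s ∈ Ico (0 : ℝ) 1, 1 - 1 / (k + 1) ≤ s ∧
      ∀ x ∈ Ico s 1, 2 * A x ≤ (1 / 2) ^ (k + 1) := by
    have hev : ∀ᶠ x in 𝓝[<] (1 : ℝ), A x ≤ (1 / 2) ^ (k + 2) :=
      hlim.eventually (ge_mem_nhds (by positivity))
    obtain ⟨l, hl, hsub⟩ := mem_nhdsLT_iff_exists_Ico_subset.1 hev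
    have hk : 0 ≤ 1 - 1 / ((k : ℝ) + 1) ∧ 1 - 1 / ((k : ℝ) + 1) < 1 := by
      constructor
      · rw [sub_nonneg, div_le_one (by positivity)]
        linarith [k.cast_nonneg (α := ℝ)]
      · linarith [show 0 < 1 / ((k : ℝ) + 1) by positivity]
    refine ⟨max l (1 - 1 / (k + 1)), ⟨le_max_of_le_right hk.1, max_lt hl hk.2⟩,
      le_max_right _ _, fun x hx => ?_⟩
    have : A x ≤ (1 / 2) ^ (k + 2) := hsub ⟨le_of_max_le_left hx.1, hx.2⟩
    rw [pow_succ _ (k + 1)] at this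
    linarith
  choose t ht hnear hAt using hthreshold
  refine ⟨t, ht, fun r hr => ?_⟩
  -- otherwise every threshold lies below `r`, contradicting `t k ≥ 1 - 1 / (k + 1)`
  by_contra! hbelow
  have hbelow' (k : ℕ) : t k < r := by
    induction k with
    | zero => exact hbelow 0 (by linarith [hA r hr])
    | succ k ih => exact hbelow (k + 1) (hAt k r ⟨ih.le, hr.2⟩)
  obtain ⟨k, hk⟩ := exists_nat_one_div_lt (sub_pos.2 hr.2)
  linarith [hnear k, hbelow' k]

theorem exists_strictMono_pow_le {t : ℕ → ℝ} (ht : ∀ k, t k ∈ Ico (0 : ℝ) 1) {ε : ℝ}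
    (hε : 0 < ε) : ∃ n : ℕ → ℕ, StrictMono n ∧ ∀ k, t k ^ n k ≤ ε := by
  choose m hm using fun k => exists_pow_lt_of_lt_one hε (ht k).2
  refine ⟨fun k => ∑ j ∈ Finset.range (k + 1), (m j + 1),
    strictMono_nat_of_lt_succ fun k => ?_, fun k => ?_⟩
  · rw [Finset.sum_range_succ _ (k + 1)]
    omega
  · have : m k + 1 ≤ ∑ j ∈ Finset.range (k + 1), (m j + 1) :=
      Finset.single_le_sum (f := fun j => m j + 1) (fun _ _ => Nat.zero_le _)
        (Finset.self_mem_range_succ k)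
    exact (pow_le_pow_of_le_one (ht k).1 (ht k).2.le (Nat.le_of_succ_le this)).trans (hm k).le

theorem lp_convergence_arbitrarily_slow_general (p : ℝ) (hp : 1 ≤ p) (A : ℝ → ℝ)
    (hA : ∀ r ∈ Set.Ico (0 : ℝ) 1, A r ∈ Set.Ioo (0 : ℝ) (1 / 2))
    (hlim : Tendsto A (𝓝[<] 1) (𝓝 0)) :
    ∃ f : ℝ → ℝ, Function.Periodic f (2 * π) ∧
      MemLp f (ENNReal.ofReal p) (volume.restrict (Set.Icc (-π) π)) ∧
      ∀ r ∈ Set.Ico (0 : ℝ) 1,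
        A r ≤ lpNorm p (fun θ => poissonIntegral f r θ - f θ) := by
  obtain ⟨t, ht, hAt⟩ := exists_thresholds (fun r hr => (hA r hr).2) hlim
  obtain ⟨n, hn, htn⟩ := exists_strictMono_pow_le ht one_half_pos
  -- `c 0 = 2` is what `A < 1 / 2` requires at the first threshold
  set c : ℕ → ℝ := fun k => 2 * (1 / 2) ^ k
  have hc : Summable c := summable_geometric_two.mul_left 2
  refine ⟨cosSeries c n, periodic_cosSeries c n,
    (continuous_cosSeries n hc).memLp_restrict_of_isCompact isCompact_Icc _, fun r hr => ?_⟩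
  obtain ⟨k, hAk, hrk⟩ := hAt r hr
  have hrn : r ^ n k ≤ 1 / 2 := (pow_le_pow_left₀ hr.1 hrk _).trans (htn k)
  calc A r ≤ |c k| * (1 - r ^ n k) / 2 := by
        rw [abs_of_pos (by positivity)]
        nlinarith [show 0 < (1 / 2 : ℝ) ^ k by positivity]
    _ ≤ _ := le_lpNorm_poissonIntegral_sub_cosSeries n hp hc hn.injective hr.1 hr.2 k

/-- the `L^p` convergence of the Poisson integral to its boundary function
can be arbitrarily slow: for `1 ≤ p < ∞` and decreasing `A : [0,1) → (0,1/2)` with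
`A(r) → 0` as `r → 1⁻`, there is a 2π-periodic `f ∈ L^p[-π,π]` with
`‖u_r - f‖_p ≥ A(r)` for all `0 ≤ r < 1`. -/
theorem lp_convergence_arbitrarily_slow (p : ℝ) (hp : 1 ≤ p) (A : ℝ → ℝ)
    (hA : ∀ r ∈ Set.Ico (0 : ℝ) 1, A r ∈ Set.Ioo (0 : ℝ) (1 / 2))
    (hmono : AntitoneOn A (Set.Ico 0 1))
    (hlim : Tendsto A (𝓝[<] 1) (𝓝 0)) :
    ∃ f : ℝ → ℝ, Function.Periodic f (2 * π) ∧
      MemLp f (ENNReal.ofReal p) (volume.restrict (Set.Icc (-π) π)) ∧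
      ∀ r ∈ Set.Ico (0 : ℝ) 1,
        A r ≤ lpNorm p (fun θ => poissonIntegral f r θ - f θ) :=
  lp_convergence_arbitrarily_slow_general p hp A hA hlim
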